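/- Let a, c, p ∈ ℂ with c not a nonpositive integer. For n ∈ ℕ define u_n = ∑_{k=0}^{n} ((a)_k / ((c)_k · k!)) · (−p)_{n−k} / (n−k)! (the Maclaurin coefficients of (1−z)^p · M(a;c;z)). Then u_0 = 1, u_1 = a/c − p, u_2 = (1/2)·((a²+a)/(c²+c) − 2ap/c + p(p−1)), and for every integer n ≥ 2, u_{n+1} = β₀(n)·u_n + β₁(n)·u_{n−1} + β₂(n)·u_{n−2}, where β₀(n) = (a + 2n(c+n−1) − p(c+2n) + n)/((n+1)(c+n)), β₁(n) = (−2a − (n−p−1)(c+n−p−2) − 2n + p + 2)/((n+1)(c+n)), and β₂(n) = (a+n−p−2)/((n+1)(c+n)). -/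

import Mathlib

open Finset

noncomputable def poch (w : ℂ) (k : ℕ) : ℂ := (ascPochhammer ℂ k).eval w

section Aux
open PowerSeries

lemma poch_zero' (w : ℂ) : poch w 0 = 1 := by simp [poch]

lemma poch_succ' (w : ℂ) (k : ℕ) : poch w (k + 1) = poch w k * (w + k) := by
  simp [poch, ascPochhammer_succ_right]

lemma poch_ne' (c : ℂ) (hc : ∀ k : ℕ, c + (k : ℂ) ≠ 0) : ∀ k, poch c k ≠ 0 := by
  intro k
  induction k with
  | zero => simp [poch_zero']
  | succ j ih => rw [poch_succ']; exact mul_ne_zero ih (hc j)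

noncomputable def Aser (a c : ℂ) : PowerSeries ℂ :=
  PowerSeries.mk fun k => poch a k / (poch c k * (Nat.factorial k : ℂ))

noncomputable def Bser (p : ℂ) : PowerSeries ℂ :=
  PowerSeries.mk fun m => poch (-p) m / (Nat.factorial m : ℂ)

open PowerSeries

lemma Aser_rec (a c : ℂ) (hc : ∀ k : ℕ, c + (k : ℂ) ≠ 0) (k : ℕ) :
    ((k : ℂ) + 1) * (c + k) * coeff (k+1) (Aser a c) = (a + k) * coeff k (Aser a c) := by
  have h1 := poch_ne' c hc k
  have h2 := hc k
  have h3 : ((Nat.factorial k : ℂ)) ≠ 0 := Nat.cast_ne_zero.2 (Nat.factorial_ne_zero k)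
  have h4 : ((k : ℂ) + 1) ≠ 0 := Nat.cast_add_one_ne_zero k
  simp only [Aser, coeff_mk, poch_succ', Nat.factorial_succ, Nat.cast_mul, Nat.cast_add,
    Nat.cast_one]
  field_simp

lemma Bser_rec (p : ℂ) (m : ℕ) :
    ((m : ℂ) + 1) * coeff (m+1) (Bser p) = ((m : ℂ) - p) * coeff m (Bser p) := by
  have h3 : ((Nat.factorial m : ℂ)) ≠ 0 := Nat.cast_ne_zero.2 (Nat.factorial_ne_zero m)
  have h4 : ((m : ℂ) + 1) ≠ 0 := Nat.cast_add_one_ne_zero m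
  simp only [Bser, coeff_mk, poch_succ', Nat.factorial_succ, Nat.cast_mul, Nat.cast_add,
    Nat.cast_one]
  field_simp
  ring

lemma coeff_X_mul' (f : PowerSeries ℂ) (d : ℕ) : coeff (d+1) (X * f) = coeff d f := by
  simpa using coeff_X_pow_mul f 1 d

lemma odeA (a c : ℂ) (hc : ∀ k : ℕ, c + (k : ℂ) ≠ 0) :
    X * d⁄dX ℂ (d⁄dX ℂ (Aser a c)) + C c * d⁄dX ℂ (Aser a c)
      = X * d⁄dX ℂ (Aser a c) + C a * (Aser a c) := by
  ext n
  cases n with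
  | zero =>
    simp only [map_add, map_mul, coeff_zero_eq_constantCoeff, constantCoeff_X,
      zero_mul, zero_add]
    simp only [← coeff_zero_eq_constantCoeff]
    simp only [coeff_C_mul, coeff_derivative, coeff_zero_C]
    have := Aser_rec a c hc 0
    push_cast at this ⊢
    linear_combination this
  | succ j =>
    simp only [map_add, coeff_X_mul', coeff_C_mul, coeff_derivative]
    have := Aser_rec a c hc (j+1)
    push_cast at this ⊢
    linear_combination this

lemma odeB (p : ℂ) : d⁄dX ℂ (Bser p) + C p * (Bser p) = X * d⁄dX ℂ (Bser p) := by
  ext n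
  cases n with
  | zero =>
    simp only [map_add, coeff_zero_eq_constantCoeff, map_mul, constantCoeff_X, zero_mul]
    simp only [← coeff_zero_eq_constantCoeff]
    simp only [coeff_C_mul, coeff_derivative, coeff_zero_C]
    have := Bser_rec p 0
    push_cast at this ⊢
    linear_combination this
  | succ j =>
    simp only [map_add, coeff_X_mul', coeff_C_mul, coeff_derivative]
    have := Bser_rec p (j+1)
    push_cast at this ⊢
    linear_combination this

lemma odeB2 (p : ℂ) : d⁄dX ℂ (d⁄dX ℂ (Bser p)) + C p * d⁄dX ℂ (Bser p)
    = X * d⁄dX ℂ (d⁄dX ℂ (Bser p)) + d⁄dX ℂ (Bser p) := by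
  ext n
  cases n with
  | zero =>
    simp only [map_add, coeff_zero_eq_constantCoeff, map_mul, constantCoeff_X, zero_mul, zero_add]
    simp only [← coeff_zero_eq_constantCoeff]
    simp only [coeff_C_mul, coeff_derivative, coeff_zero_C]
    have := Bser_rec p 1
    push_cast at this ⊢
    linear_combination this
  | succ j =>
    simp only [map_add, coeff_X_mul', coeff_C_mul, coeff_derivative]
    have := Bser_rec p (j+2)
    push_cast at this ⊢
    linear_combination ((j:ℂ) + 2) * this

lemma odeF (a c p : ℂ) (A B : PowerSeries ℂ)
    (hA : X * d⁄dX ℂ (d⁄dX ℂ A) + C c * d⁄dX ℂ A = X * d⁄dX ℂ A + C a * A)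
    (hB : d⁄dX ℂ B + C p * B = X * d⁄dX ℂ B)
    (hB2 : d⁄dX ℂ (d⁄dX ℂ B) + C p * d⁄dX ℂ B = X * d⁄dX ℂ (d⁄dX ℂ B) + d⁄dX ℂ B) :
    X * d⁄dX ℂ (d⁄dX ℂ (A * B)) + C c * d⁄dX ℂ (A * B) + C (p*c - a) * (A * B)
      + C (2*p - 2*c - 1) * (X * d⁄dX ℂ (A * B)) + C (c + 2 - 2*p) * (X^2 * d⁄dX ℂ (A * B)) + C (p - a) * (X^2 * (A * B))
      + X^3 * d⁄dX ℂ (d⁄dX ℂ (A * B))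
    = C 2 * (X^2 * d⁄dX ℂ (d⁄dX ℂ (A * B))) + X^3 * d⁄dX ℂ (A * B)
      + C (p*c - 2*a - p^2) * (X * (A * B)) := by
  have hd1 : d⁄dX ℂ (A * B) = d⁄dX ℂ A * B + A * d⁄dX ℂ B := by
    rw [Derivation.leibniz, smul_eq_mul, smul_eq_mul]; ring
  have hd2 : d⁄dX ℂ (d⁄dX ℂ (A * B))
      = d⁄dX ℂ (d⁄dX ℂ A) * B + 2 * (d⁄dX ℂ A * d⁄dX ℂ B) + A * d⁄dX ℂ (d⁄dX ℂ B) := by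
    rw [hd1, map_add, Derivation.leibniz, Derivation.leibniz, smul_eq_mul, smul_eq_mul,
      smul_eq_mul, smul_eq_mul]
    ring
  rw [hd2, hd1]
  simp only [map_sub, map_add, map_mul, map_pow, map_one, map_ofNat]
  linear_combination ((1 - X)^2 * B) * hA + (X * (1 - X) * A) * hB2 +
    (2*X*(1-X) * d⁄dX ℂ A + ((1 + C p) * X + (C c - X) * (1 - X)) * A) * hB

end Aux

open PowerSeries in
theorem stmt_1 (a c p : ℂ) (hc : ∀ k : ℕ, c + (k : ℂ) ≠ 0)
    (u : ℕ → ℂ)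
    (hu : ∀ n : ℕ, u n = ∑ k ∈ range (n + 1),
      poch a k / (poch c k * (Nat.factorial k : ℂ)) *
        (poch (-p) (n - k) / (Nat.factorial (n - k) : ℂ))) :
    u 0 = 1 ∧
    u 1 = a / c - p ∧
    u 2 = (1 / 2) * ((a ^ 2 + a) / (c ^ 2 + c) - 2 * a * p / c + p * (p - 1)) ∧
    ∀ n : ℕ, 2 ≤ n →
      u (n + 1) =
        (a + 2 * n * (c + n - 1) - p * (c + 2 * n) + n) / (((n : ℂ) + 1) * (c + n)) * u n
        + (-2 * a - (n - p - 1) * (c + n - p - 2) - 2 * n + p + 2) /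
            (((n : ℂ) + 1) * (c + n)) * u (n - 1)
        + (a + n - p - 2) / (((n : ℂ) + 1) * (c + n)) * u (n - 2) := by
  have hc0 : c ≠ 0 := by simpa using hc 0
  have hc1 : c + 1 ≠ 0 := by simpa using hc 1
  refine ⟨?_, ?_, ?_, ?_⟩
  · rw [hu 0]; simp [poch_zero']
  · rw [hu 1]
    simp [Finset.sum_range_succ, poch_succ', poch_zero', Nat.factorial]
    field_simp
    ring
  · rw [hu 2]
    simp [Finset.sum_range_succ, poch_succ', poch_zero', Nat.factorial]
    have : c^2 + c = c * (c + 1) := by ring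
    rw [this]
    field_simp
    ring
  · -- main recurrence
    have hufn : ∀ n, u n = coeff n (Aser a c * Bser p) := by
      intro n
      rw [hu n, coeff_mul, Finset.Nat.sum_antidiagonal_eq_sum_range_succ_mk]
      simp [Aser, Bser, coeff_mk]
    have hf := odeF a c p (Aser a c) (Bser p) (odeA a c hc) (odeB p) (odeB2 p)
    intro n hn
    obtain ⟨m, rfl⟩ : ∃ m, n = m + 2 := ⟨n - 2, by omega⟩
    rcases m with _ | k
    · -- n = 2
      have h := congrArg (coeff 2) hf
      have e1 : ∀ G : PowerSeries ℂ, coeff 2 (X * G) = coeff 1 G :=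
        fun G => coeff_X_mul' G 1
      have e2 : ∀ G : PowerSeries ℂ, coeff 2 (X^2 * G) = coeff 0 G :=
        fun G => coeff_X_pow_mul G 2 0
      have e3 : ∀ G : PowerSeries ℂ, coeff 2 (X^3 * G) = 0 := by
        intro G; rw [coeff_X_pow_mul']; norm_num
      simp only [map_add, e1, e2, e3, coeff_C_mul, coeff_derivative] at h
      simp only [show (0:ℕ)+1 = 1 from rfl, show (1:ℕ)+1 = 2 from rfl,
        show (2:ℕ)+1 = 3 from rfl] at h
      simp only [← hufn] at h
      push_cast at h
      norm_num
      have hd2 : c + 2 ≠ 0 := by simpa using hc 2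
      field_simp
      linear_combination h
    · -- n = k + 3
      have hkn : k + 1 + 2 = k + 3 := rfl
      rw [hkn]
      have h := congrArg (coeff (k+3)) hf
      have e1 : ∀ G : PowerSeries ℂ, coeff (k+3) (X * G) = coeff (k+2) G :=
        fun G => coeff_X_mul' G (k+2)
      have e2 : ∀ G : PowerSeries ℂ, coeff (k+3) (X^2 * G) = coeff (k+1) G :=
        fun G => coeff_X_pow_mul G 2 (k+1)
      have e3 : ∀ G : PowerSeries ℂ, coeff (k+3) (X^3 * G) = coeff k G :=
        fun G => coeff_X_pow_mul G 3 k
      simp only [map_add, e1, e2, e3, coeff_C_mul, coeff_derivative] at h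
      simp only [show k+1+1 = k+2 from rfl, show k+2+1 = k+3 from rfl,
        show k+3+1 = k+4 from rfl] at h
      simp only [← hufn] at h
      simp only [show k+3+1 = k+4 from rfl, show k+3-1 = k+2 from rfl,
        show k+3-2 = k+1 from rfl]
      have hd2 : c + ((k:ℂ) + 3) ≠ 0 := by
        have := hc (k+3); push_cast at this; exact this
      have hd1 : ((k:ℂ) + 3 + 1) ≠ 0 := by
        have := Nat.cast_add_one_ne_zero (R := ℂ) (k+3); push_cast at this
        exact this
      push_cast at h ⊢
      have hD : (((k:ℂ) + 3 + 1) * (c + ((k:ℂ) + 3))) ≠ 0 := mul_ne_zero hd1 hd2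
      rw [div_mul_eq_mul_div, div_mul_eq_mul_div, div_mul_eq_mul_div, ← add_div,
        ← add_div, eq_div_iff hD]
      linear_combination h
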